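/- (Nayak's random access code bound.) Let n, m ≥ 1, let ρ_x be a density matrix on ℂ^{2^m} for each x ∈ {0,1}^n, let (E_i^0, E_i^1) be a two-outcome POVM on ℂ^{2^m} for each i ∈ [n], and let p ≥ 1/2. If tr(ρ_x · E_i^{x_i}) ≥ p for all x ∈ {0,1}^n and all i ∈ [n], then m ≥ (1 − H(p)) · n. -/

import Mathlib

/-!
For each `x` put `S_x = ∑ᵢ ±Dᵢ` with `Dᵢ = E_i^1 - E_i^0` and sign `+` iff `xᵢ = 1`. Success
probability `p` gives `tr(ρ_x S_x) ≥ (2p-1)n`, so `S_x` has an eigenvalue `≥ (2p-1)n` and, for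
`t ≥ 0`, `2ⁿ e^{t(2p-1)n} ≤ ∑ₓ tr e^{t S_x}`. Expanding `S_xᵏ` into words in the contractions `Dᵢ`
and summing over `x` leaves only words with nonnegative coefficients (a word survives iff every
letter occurs an even number of times), each of trace at most `2^m`; hence
`∑ₓ tr S_xᵏ ≤ 2^m ∑ₓ (∑ᵢ ±1)ᵏ` and `∑ₓ tr e^{t S_x} ≤ 2^m (2 cosh t)ⁿ`. The choice
`t = ½ log (p / (1 - p))` turns this into `m ≥ (1 - H(p)) n`; `p = 1` follows by continuity of `H`.
-/

open ComplexOrder Matrix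

/-- The binary entropy function `H(p) = -p log₂ p - (1-p) log₂ (1-p)`. -/
noncomputable def binEnt (p : ℝ) : ℝ :=
  -p * Real.logb 2 p - (1 - p) * Real.logb 2 (1 - p)

open Finset Real
open scoped Matrix.Norms.L2Operator MatrixOrder

def boolSign (b : Bool) : ℝ := if b then 1 else -1

@[simp] lemma boolSign_true : boolSign true = 1 := rfl
@[simp] lemma boolSign_false : boolSign false = -1 := rfl

section Signs

variable {ι : Type*} [Fintype ι] [DecidableEq ι]

lemma sum_exp_mul_sum_boolSign (t : ℝ) :
    ∑ x : ι → Bool, exp (t * ∑ i, boolSign (x i)) = (2 * cosh t) ^ Fintype.card ι := by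
  simp_rw [mul_sum, exp_sum]
  rw [← Fintype.prod_sum (κ := fun _ => Bool) fun _ b => exp (t * boolSign b), prod_const,
    card_univ, Fintype.sum_bool, cosh_eq]
  simp only [boolSign_true, boolSign_false, mul_one, mul_neg_one]
  ring

lemma sum_prod_boolSign_comp_nonneg {κ : Type*} [Fintype κ] (w : κ → ι) :
    0 ≤ ∑ x : ι → Bool, ∏ k, boolSign (x (w k)) := by
  have hfib (x : ι → Bool) :
      ∏ k, boolSign (x (w k)) = ∏ i, boolSign (x i) ^ #{k | w k = i} := by
    simp_rw [← prod_fiberwise' univ w fun i => boolSign (x i), prod_const]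
  simp_rw [hfib]
  rw [← Fintype.prod_sum (κ := fun _ => Bool) fun i b => boolSign b ^ #{k | w k = i}]
  refine prod_nonneg fun i _ => ?_
  rcases Nat.even_or_odd #{k | w k = i} with h | h <;> simp [h.neg_one_pow]

end Signs

lemma sum_smul_pow {ι R A : Type*} [Fintype ι] [CommSemiring R] [Semiring A] [Algebra R A]
    (c : ι → R) (a : ι → A) (q : ℕ) :
    (∑ i, c i • a i) ^ q =
      ∑ w : Fin q → ι, (∏ k, c (w k)) • (List.ofFn fun k => a (w k)).prod := by
  induction q with
  | zero => simp
  | succ q ih =>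
    rw [pow_succ', ih, sum_mul_sum, ← (Fin.consEquiv fun _ => ι).sum_comp, Fintype.sum_prod_type]
    refine sum_congr rfl fun i _ => sum_congr rfl fun w _ => ?_
    simp [Fin.prod_univ_succ, List.ofFn_succ, smul_smul, mul_comm]

lemma sum_exp_le_mul_sum_exp {α β : Type*} [Fintype α] [Fintype β] (f : α → ℝ) (g : β → ℝ)
    (c : ℝ) (h : ∀ q : ℕ, ∑ a, f a ^ q ≤ c * ∑ b, g b ^ q) :
    ∑ a, exp (f a) ≤ c * ∑ b, exp (g b) := by
  have hexp (x : ℝ) : HasSum (fun q : ℕ => x ^ q / q.factorial) (exp x) :=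
    exp_eq_exp_ℝ ▸ NormedSpace.expSeries_div_hasSum_exp x
  refine hasSum_le (fun q => ?_) (hasSum_sum fun a _ => hexp (f a))
    ((hasSum_sum fun b _ => hexp (g b)).mul_left c)
  simp_rw [← sum_div, mul_div_assoc']
  exact div_le_div_of_nonneg_right (h q) (by positivity)

lemma binEnt_eq_binEntropy_div_log_two (p : ℝ) : binEnt p = binEntropy p / log 2 := by
  simp only [binEnt, binEntropy, logb, log_inv]
  ring

lemma continuous_binEnt : Continuous binEnt := by
  simpa only [← binEnt_eq_binEntropy_div_log_two] using binEntropy_continuous.div_const (log 2)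

lemma log_two_mul_cosh_half_log_odds {p : ℝ} (hp₀ : 0 < p) (hp₁ : p < 1) :
    log (2 * cosh (log (p / (1 - p)) / 2)) = -(log p + log (1 - p)) / 2 := by
  set t := log (p / (1 - p)) / 2 with ht
  have h1p : 0 < 1 - p := sub_pos.mpr hp₁
  have htwo : 2 * t = log p - log (1 - p) := by
    rw [ht, mul_div_cancel₀ _ two_ne_zero, log_div hp₀.ne' h1p.ne']
  have hcosh : 2 * cosh t = exp (-t) / (1 - p) := by
    have : exp (2 * t) = p / (1 - p) := by
      rw [ht, mul_div_cancel₀ _ two_ne_zero, exp_log (by positivity)]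
    rw [cosh_eq, show exp t = exp (-t) * exp (2 * t) by rw [← exp_add]; ring_nf, this]
    field_simp
    ring
  rw [hcosh, log_div (exp_pos _).ne' h1p.ne', log_exp]
  linarith

lemma one_sub_binEnt_mul_le {n m : ℕ} {p : ℝ} (hp : 1 / 2 ≤ p) (hp₁ : p < 1)
    (h : ∀ t : ℝ, 0 ≤ t →
      (2 : ℝ) ^ n * exp (t * ((2 * p - 1) * n)) ≤ 2 ^ m * (2 * cosh t) ^ n) :
    (1 - binEnt p) * n ≤ m := by
  have hp₀ : 0 < p := by linarith
  have h1p : 0 < 1 - p := by linarith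
  set t := log (p / (1 - p)) / 2 with ht
  have ht₀ : 0 ≤ t := div_nonneg (log_nonneg ((one_le_div h1p).mpr (by linarith))) zero_le_two
  have htwo : 2 * t = log p - log (1 - p) := by
    rw [ht, mul_div_cancel₀ _ two_ne_zero, log_div hp₀.ne' h1p.ne']
  have hlog := log_le_log (by positivity) (h t ht₀)
  rw [log_mul (by positivity) (exp_pos _).ne', log_mul (by positivity) (by positivity), log_pow,
    log_pow, log_pow, log_exp, log_two_mul_cosh_half_log_odds hp₀ hp₁] at hlog
  clear_value t
  rw [binEnt_eq_binEntropy_div_log_two, binEntropy, log_inv, log_inv,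
    ← mul_le_mul_iff_left₀ (log_pos one_lt_two)]
  field_simp
  linear_combination hlog - (n : ℝ) * (2 * p - 1) / 2 * htwo

lemma CStarAlgebra.norm_le_one_of_neg_one_le_of_le_one {A : Type*} [CStarAlgebra A]
    [PartialOrder A] [StarOrderedRing A] {a : A} (h₁ : -1 ≤ a) (h₂ : a ≤ 1) : ‖a‖ ≤ 1 := by
  have ha : IsSelfAdjoint a := by
    simpa using (IsSelfAdjoint.one A).sub (IsSelfAdjoint.of_nonneg (sub_nonneg.mpr h₂))
  nontriviality A
  rcases norm_or_neg_norm_mem_spectrum ha with h | h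
  · exact (le_algebraMap_iff_spectrum_le ha).mp (by simpa using h₂) _ h
  · have := (algebraMap_le_iff_le_spectrum (r := -1) ha).mp (by simpa using h₁) _ h
    linarith

lemma CStarAlgebra.norm_sub_le_one_of_add_eq_one {A : Type*} [CStarAlgebra A]
    [PartialOrder A] [StarOrderedRing A] {a b : A} (ha : 0 ≤ a) (hb : 0 ≤ b) (hab : a + b = 1) :
    ‖b - a‖ ≤ 1 := by
  refine norm_le_one_of_neg_one_le_of_le_one (sub_nonneg.mp ?_) (sub_nonneg.mp ?_)
  · rw [← hab, show b - a - -(a + b) = b + b by abel]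
    exact add_nonneg hb hb
  · rw [← hab, show a + b - (b - a) = a + a by abel]
    exact add_nonneg ha ha

def signedSum {ι M : Type*} [Fintype ι] [AddCommMonoid M] [Module ℝ M] (v : ι → M)
    (x : ι → Bool) : M :=
  ∑ i, boolSign (x i) • v i

namespace Matrix

variable {ι m n 𝕜 : Type*} [Fintype ι] [RCLike 𝕜]

lemma isHermitian_signedSum {D : ι → Matrix n n 𝕜} (hD : ∀ i, (D i).IsHermitian)
    (x : ι → Bool) : (signedSum D x).IsHermitian :=
  isSelfAdjoint_sum _ fun i _ => (IsSelfAdjoint.all _).smul (hD i).isSelfAdjoint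

variable [Fintype n]

lemma PosSemidef.trace_mul_nonneg {A B : Matrix n n 𝕜} (hA : A.PosSemidef)
    (hB : B.PosSemidef) : 0 ≤ (A * B).trace := by
  classical
  obtain ⟨C, rfl⟩ := CStarAlgebra.nonneg_iff_eq_star_mul_self.mp hA.nonneg
  rw [star_eq_conjTranspose, Matrix.mul_assoc, trace_mul_comm]
  exact (hB.mul_mul_conjTranspose_same C).trace_nonneg

lemma IsHermitian.trace_pow [DecidableEq n] {A : Matrix n n 𝕜} (hA : A.IsHermitian) (q : ℕ) :
    (A ^ q).trace = ∑ j, (hA.eigenvalues j : 𝕜) ^ q := by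
  conv_lhs => rw [hA.spectral_theorem, ← map_pow, Unitary.conjStarAlgAut_apply, trace_mul_cycle,
    Unitary.coe_star_mul_self, Matrix.one_mul, diagonal_pow, trace_diagonal]
  simp

lemma IsHermitian.exists_re_trace_mul_le_eigenvalues [DecidableEq n] {ρ A : Matrix n n 𝕜}
    (hρ : ρ.PosSemidef) (hρ1 : ρ.trace = 1) (hA : A.IsHermitian) :
    ∃ j, RCLike.re (ρ * A).trace ≤ hA.eigenvalues j := by
  have : Nonempty n := by
    by_contra! h
    simp [trace] at hρ1
  obtain ⟨j, hj⟩ := Finite.exists_max hA.eigenvalues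
  refine ⟨j, ?_⟩
  have hle : A ≤ algebraMap ℝ _ (hA.eigenvalues j) := le_algebraMap_of_spectrum_le (ha := hA) <| by
    rw [hA.spectrum_real_eq_range_eigenvalues]
    rintro _ ⟨k, rfl⟩
    exact hj k
  have := RCLike.nonneg_iff.mp (hρ.trace_mul_nonneg hle) |>.1
  rw [Matrix.mul_sub, trace_sub, Algebra.algebraMap_eq_smul_one, mul_smul_comm, Matrix.mul_one,
    trace_smul, hρ1, map_sub, RCLike.smul_re] at this
  simpa using this

lemma norm_apply_le_l2_opNorm [DecidableEq n] [Fintype m] (A : Matrix m n 𝕜) (i : m) (j : n) :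
    ‖A i j‖ ≤ ‖A‖ :=
  calc ‖A i j‖ = ‖(EuclideanSpace.equiv m 𝕜).symm (A *ᵥ EuclideanSpace.single j 1) i‖ := by
        simp [mulVec_single]
    _ ≤ ‖(EuclideanSpace.equiv m 𝕜).symm (A *ᵥ EuclideanSpace.single j 1)‖ :=
        PiLp.norm_apply_le _ _
    _ ≤ ‖A‖ * ‖EuclideanSpace.single j (1 : 𝕜)‖ := l2_opNorm_mulVec A _
    _ = ‖A‖ := by simp

lemma re_trace_le_card_mul_l2_opNorm [DecidableEq n] (A : Matrix n n 𝕜) :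
    RCLike.re A.trace ≤ Fintype.card n * ‖A‖ := by
  rw [trace, map_sum]
  calc ∑ i, RCLike.re (A i i) ≤ ∑ _i : n, ‖A‖ :=
        sum_le_sum fun i _ => (RCLike.re_le_norm _).trans (norm_apply_le_l2_opNorm A i i)
    _ = _ := by simp

lemma norm_list_prod_le_one [DecidableEq n] {l : List (Matrix n n 𝕜)} (hl : ∀ A ∈ l, ‖A‖ ≤ 1) :
    ‖l.prod‖ ≤ 1 := by
  refine List.prod_induction (‖·‖ ≤ 1) (fun A B hA hB => ?_) ?_ hl
  · exact (norm_mul_le A B).trans (mul_le_one₀ hA (norm_nonneg B) hB)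
  · rw [← diagonal_one, l2_opNorm_diagonal]
    exact (pi_norm_le_iff_of_nonneg zero_le_one).mpr fun _ => by simp

end Matrix

section RandomAccessCode

open Matrix

variable {ι n 𝕜 : Type*} [Fintype ι] [DecidableEq ι] [Fintype n] [DecidableEq n] [RCLike 𝕜]

lemma sum_re_trace_signedSum_pow_le {D : ι → Matrix n n 𝕜} (hD : ∀ i, ‖D i‖ ≤ 1) (q : ℕ) :
    ∑ x : ι → Bool, RCLike.re (signedSum D x ^ q).trace ≤
      Fintype.card n * ∑ x : ι → Bool, (∑ i, boolSign (x i)) ^ q := by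
  have hword (w : Fin q → ι) :
      RCLike.re (List.ofFn fun k => D (w k)).prod.trace ≤ Fintype.card n := by
    refine (re_trace_le_card_mul_l2_opNorm _).trans (mul_le_of_le_one_right (by positivity) ?_)
    refine norm_list_prod_le_one fun A hA => ?_
    obtain ⟨k, rfl⟩ := List.mem_ofFn.mp hA
    exact hD (w k)
  calc ∑ x : ι → Bool, RCLike.re (signedSum D x ^ q).trace
      = ∑ w : Fin q → ι, (∑ x : ι → Bool, ∏ k, boolSign (x (w k))) *
          RCLike.re (List.ofFn fun k => D (w k)).prod.trace := by
        simp_rw [signedSum, sum_smul_pow, trace_sum, trace_smul, map_sum, RCLike.smul_re, sum_mul]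
        exact sum_comm
    _ ≤ ∑ w : Fin q → ι, (∑ x : ι → Bool, ∏ k, boolSign (x (w k))) * Fintype.card n :=
        sum_le_sum fun w _ => mul_le_mul_of_nonneg_left (hword w) (sum_prod_boolSign_comp_nonneg w)
    _ = Fintype.card n * ∑ x : ι → Bool, (∑ i, boolSign (x i)) ^ q := by
        simp_rw [Fintype.sum_pow, ← sum_mul, mul_comm _ (Fintype.card n : ℝ)]
        rw [sum_comm]

theorem two_pow_mul_exp_le_card_mul_two_mul_cosh_pow (ρ : (ι → Bool) → Matrix n n 𝕜)
    (hρ : ∀ x, (ρ x).PosSemidef ∧ (ρ x).trace = 1) {D : ι → Matrix n n 𝕜}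
    (hDh : ∀ i, (D i).IsHermitian) (hD : ∀ i, ‖D i‖ ≤ 1) {c t : ℝ}
    (hc : ∀ x, c ≤ RCLike.re (ρ x * signedSum D x).trace) (ht : 0 ≤ t) :
    2 ^ Fintype.card ι * exp (t * c) ≤ Fintype.card n * (2 * cosh t) ^ Fintype.card ι := by
  have hS (x : ι → Bool) := isHermitian_signedSum hDh x
  choose j hj using fun x => (hS x).exists_re_trace_mul_le_eigenvalues (hρ x).1 (hρ x).2
  have hmoment (q : ℕ) : ∑ xk : (ι → Bool) × n, (t * (hS xk.1).eigenvalues xk.2) ^ q ≤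
      Fintype.card n * ∑ x : ι → Bool, (t * ∑ i, boolSign (x i)) ^ q := by
    have := mul_le_mul_of_nonneg_left (sum_re_trace_signedSum_pow_le hD q) (pow_nonneg ht q)
    simp_rw [(hS _).trace_pow, map_sum, ← RCLike.ofReal_pow, RCLike.ofReal_re] at this
    simpa [Fintype.sum_prod_type, mul_pow, ← mul_sum, mul_left_comm] using this
  calc 2 ^ Fintype.card ι * exp (t * c) = ∑ _x : ι → Bool, exp (t * c) := by simp
    _ ≤ ∑ x : ι → Bool, ∑ k, exp (t * (hS x).eigenvalues k) := by
        refine sum_le_sum fun x _ => ?_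
        refine (exp_le_exp.2 (mul_le_mul_of_nonneg_left ((hc x).trans (hj x)) ht)).trans ?_
        exact single_le_sum (f := fun k => exp (t * (hS x).eigenvalues k))
          (fun k _ => (exp_pos _).le) (mem_univ (j x))
    _ = ∑ xk : (ι → Bool) × n, exp (t * (hS xk.1).eigenvalues xk.2) :=
        (Fintype.sum_prod_type' _).symm
    _ ≤ Fintype.card n * ∑ x : ι → Bool, exp (t * ∑ i, boolSign (x i)) :=
        sum_exp_le_mul_sum_exp _ _ _ hmoment
    _ = Fintype.card n * (2 * cosh t) ^ Fintype.card ι := by rw [sum_exp_mul_sum_boolSign]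

end RandomAccessCode

lemma re_trace_mul_add_re_trace_mul_eq_one {n 𝕜 : Type*} [Fintype n] [DecidableEq n]
    [RCLike 𝕜] {ρ A B : Matrix n n 𝕜} (hρ : ρ.trace = 1) (hAB : A + B = 1) :
    RCLike.re (ρ * A).trace + RCLike.re (ρ * B).trace = 1 := by
  rw [← map_add, ← trace_add, ← Matrix.mul_add, hAB, Matrix.mul_one, hρ, RCLike.one_re]

lemma le_re_trace_mul_signedSum {ι n 𝕜 : Type*} [Fintype ι] [Fintype n] [DecidableEq n]
    [RCLike 𝕜] {ρ : Matrix n n 𝕜} (hρ : ρ.trace = 1) {E : ι → Bool → Matrix n n 𝕜}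
    (hE : ∀ i, E i false + E i true = 1) {x : ι → Bool} {p : ℝ}
    (h : ∀ i, p ≤ RCLike.re (ρ * E i (x i)).trace) :
    (2 * p - 1) * Fintype.card ι ≤
      RCLike.re (ρ * signedSum (fun i => E i true - E i false) x).trace := by
  have hbias (i : ι) :
      2 * p - 1 ≤ boolSign (x i) * RCLike.re (ρ * (E i true - E i false)).trace := by
    have hsum := re_trace_mul_add_re_trace_mul_eq_one hρ (hE i)
    have hi := h i
    rw [Matrix.mul_sub, trace_sub, map_sub]
    cases hx : x i <;> simp only [hx, boolSign_true, boolSign_false] at hi ⊢ <;> linarith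
  calc (2 * p - 1) * Fintype.card ι = ∑ _i : ι, (2 * p - 1) := by
        rw [sum_const, card_univ, nsmul_eq_mul, mul_comm]
    _ ≤ ∑ i, boolSign (x i) * RCLike.re (ρ * (E i true - E i false)).trace :=
        sum_le_sum fun i _ => hbias i
    _ = RCLike.re (ρ * signedSum (fun i => E i true - E i false) x).trace := by
        simp [signedSum, mul_sum, trace_sum, RCLike.smul_re]

theorem stmt8_general (n m : ℕ) (hn : 1 ≤ n) (p : ℝ) (hp : 1 / 2 ≤ p)
    (ρ : (Fin n → Bool) → Matrix (Fin (2 ^ m)) (Fin (2 ^ m)) ℂ)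
    (hρ : ∀ x, (ρ x).PosSemidef ∧ (ρ x).trace = 1)
    (E : Fin n → Bool → Matrix (Fin (2 ^ m)) (Fin (2 ^ m)) ℂ)
    (hE : ∀ i, (E i false).PosSemidef ∧ (E i true).PosSemidef ∧
      E i false + E i true = 1)
    (h : ∀ (x : Fin n → Bool) (i : Fin n), p ≤ ((ρ x * E i (x i)).trace).re) :
    (1 - binEnt p) * n ≤ m := by
  set D : Fin n → Matrix (Fin (2 ^ m)) (Fin (2 ^ m)) ℂ := fun i => E i true - E i false
  have hDh (i : Fin n) : (D i).IsHermitian := (hE i).2.1.isHermitian.sub (hE i).1.isHermitian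
  have hD (i : Fin n) : ‖D i‖ ≤ 1 :=
    CStarAlgebra.norm_sub_le_one_of_add_eq_one (hE i).1.nonneg (hE i).2.1.nonneg (hE i).2.2
  have hbound (q : ℝ) (hq : q ∈ Set.Ico (1 / 2) 1) (hqp : q ≤ p) : (1 - binEnt q) * n ≤ m :=
    one_sub_binEnt_mul_le hq.1 hq.2 fun t ht => by
      simpa using two_pow_mul_exp_le_card_mul_two_mul_cosh_pow ρ hρ hDh hD
        (fun x => le_re_trace_mul_signedSum (hρ x).2 (fun i => (hE i).2.2)
          fun i => hqp.trans (h x i)) ht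
  have hp₁ : p ≤ 1 := by
    let x : Fin n → Bool := fun _ => true
    let i : Fin n := ⟨0, hn⟩
    have hsum := re_trace_mul_add_re_trace_mul_eq_one (hρ x).2 (hE i).2.2
    have hfalse := (RCLike.nonneg_iff.mp ((hρ x).1.trace_mul_nonneg (hE i).1)).1
    have htrue := h x i
    simp only [RCLike.re_to_complex] at hsum hfalse
    linarith
  rcases hp₁.lt_or_eq with hp₁ | rfl
  · exact hbound p ⟨hp, hp₁⟩ le_rfl
  · have hlim := (continuous_binEnt.tendsto 1).mono_left (nhdsWithin_le_nhds (s := Set.Iio 1))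
    refine le_of_tendsto ((hlim.const_sub 1).mul_const (n : ℝ)) ?_
    filter_upwards [Ioo_mem_nhdsLT (by norm_num : (1 : ℝ) / 2 < 1)] with q hq
    exact hbound q (Set.Ioo_subset_Ico_self hq) hq.2.le

/-- Nayak's random access code bound: if `ρ_x` is a density matrix on
`ℂ^{2^m}` for each `x ∈ {0,1}^n`, and for each `i ∈ [n]` a two-outcome POVM
`(E_i^0, E_i^1)` recovers the bit `x_i` from `ρ_x` with probability at least
`p ≥ 1/2`, then `m ≥ (1 - H(p)) n`. -/
theorem stmt8 (n m : ℕ) (hn : 1 ≤ n) (hm : 1 ≤ m) (p : ℝ) (hp : 1 / 2 ≤ p)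
    (ρ : (Fin n → Bool) → Matrix (Fin (2 ^ m)) (Fin (2 ^ m)) ℂ)
    (hρ : ∀ x, (ρ x).PosSemidef ∧ (ρ x).trace = 1)
    (E : Fin n → Bool → Matrix (Fin (2 ^ m)) (Fin (2 ^ m)) ℂ)
    (hE : ∀ i, (E i false).PosSemidef ∧ (E i true).PosSemidef ∧
      E i false + E i true = 1)
    (h : ∀ (x : Fin n → Bool) (i : Fin n), p ≤ ((ρ x * E i (x i)).trace).re) :
    (1 - binEnt p) * n ≤ m :=
  stmt8_general n m hn p hp ρ hρ E hE h
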